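/- arXiv:1510.01890 — 6 statements merged into one kernel-verified Lean document; each statement's English description precedes it below -/
import Mathlib

section
/- Let n be a positive integer with n odd double factorial defined by n!! = n(n-2)···3·1 and (-1)!! = 1. For all integers p ≥ 1 and m > p, the sum over all multi-indices (k_1,...,k_m) of nonnegative integers with k_1+···+k_m = p of the multinomial coefficient p!/(k_1!···k_m!) times (∏_{i=1}^m (2k_i - 1)!! - 1) is at most 4^p · p! · m^{p-1}. -/
/-!
A term vanishes unless some `k i ≥ 2`, because `(-1)!! = 1!! = 1`. Each term is at most `2^p p!`:
the bound `(2k-1)!! ≤ 2^k k!` cancels the denominator of the multinomial coefficient. A tuple with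
some `k i ≥ 2` arises from a tuple of sum `p - 2` by adding `2` to one of the `m` coordinates, and
there are at most `m^(p-2)` tuples of sum `p - 2`, since their multinomial coefficients are
positive and add up to `m^(p-2)`. Hence at most `m^(p-1)` terms are nonzero, and the sum is at most
`2^p p! m^(p-1)`.
-/

open Finset

/-- The odd double factorial: `oddDoubleFactorial k = (2k-1)!! = (2k-1)(2k-3)⋯3⋅1`,
with the convention `(-1)!! = 1` (the case `k = 0`). -/
def oddDoubleFactorial (k : ℕ) : ℕ := ∏ i ∈ Finset.range k, (2 * i + 1)

lemma oddDoubleFactorial_le (k : ℕ) : oddDoubleFactorial k ≤ 2 ^ k * k.factorial := by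
  calc oddDoubleFactorial k ≤ ∏ i ∈ range k, 2 * (i + 1) := by
        unfold oddDoubleFactorial; gcongr; omega
    _ = 2 ^ k * k.factorial := by
        rw [prod_mul_distrib, prod_const, card_range, prod_range_add_one_eq_factorial]

lemma oddDoubleFactorial_eq_one {k : ℕ} (hk : k ≤ 1) : oddDoubleFactorial k = 1 := by
  interval_cases k <;> rfl

lemma multinomial_mul_prod_oddDoubleFactorial_le {ι : Type*} (s : Finset ι) (k : ι → ℕ) :
    Nat.multinomial s k * ∏ i ∈ s, oddDoubleFactorial (k i)
      ≤ 2 ^ (∑ i ∈ s, k i) * (∑ i ∈ s, k i).factorial :=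
  calc Nat.multinomial s k * ∏ i ∈ s, oddDoubleFactorial (k i)
      ≤ Nat.multinomial s k * ∏ i ∈ s, 2 ^ k i * (k i).factorial := by
        gcongr with i; exact oddDoubleFactorial_le (k i)
    _ = 2 ^ (∑ i ∈ s, k i) * ((∏ i ∈ s, (k i).factorial) * Nat.multinomial s k) := by
        rw [prod_mul_distrib, prod_pow_eq_pow_sum]; ring
    _ = 2 ^ (∑ i ∈ s, k i) * (∑ i ∈ s, k i).factorial := by rw [Nat.multinomial_spec]

lemma card_antidiagonalTuple_le (m n : ℕ) : #(Nat.antidiagonalTuple m n) ≤ m ^ n := by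
  have h := sum_pow_eq_sum_piAntidiag (univ : Finset (Fin m)) (fun _ ↦ (1 : ℕ)) n
  simp only [sum_const, card_univ, Fintype.card_fin, smul_eq_mul, mul_one, one_pow, prod_const_one,
    Nat.cast_id, piAntidiag_univ_fin_eq_antidiagonalTuple] at h
  rw [h, card_eq_sum_ones]
  exact sum_le_sum fun k _ ↦ Nat.multinomial_pos _ _

lemma filter_exists_two_le_subset_biUnion (m n : ℕ) :
    (Nat.antidiagonalTuple m (n + 2)).filter (fun k ↦ ∃ i, 2 ≤ k i) ⊆
      univ.biUnion fun i ↦ (Nat.antidiagonalTuple m n).image (· + Pi.single i 2) := by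
  intro k hk
  obtain ⟨hsum, i, hi⟩ := by simpa only [mem_filter, Nat.mem_antidiagonalTuple] using hk
  have hle : Pi.single i 2 ≤ k := by
    intro j
    rcases eq_or_ne j i with rfl | hj
    · simpa using hi
    · simp [hj]
  have hadd : k - Pi.single i 2 + Pi.single i 2 = k := tsub_add_cancel_of_le hle
  have hsum' := congrArg (fun f : Fin m → ℕ ↦ ∑ j, f j) hadd
  simp only [Pi.add_apply, sum_add_distrib, sum_pi_single', mem_univ, if_true, hsum] at hsum'
  simp only [mem_biUnion, mem_univ, true_and, mem_image, Nat.mem_antidiagonalTuple]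
  exact ⟨i, k - Pi.single i 2, by omega, hadd⟩

lemma card_filter_exists_two_le (m n : ℕ) :
    #((Nat.antidiagonalTuple m n).filter (fun k ↦ ∃ i, 2 ≤ k i)) ≤ m ^ (n - 1) := by
  obtain hn | ⟨n, rfl⟩ : n < 2 ∨ ∃ n', n = n' + 2 :=
    (Nat.lt_or_ge n 2).imp_right fun h ↦ ⟨n - 2, by omega⟩
  · suffices (Nat.antidiagonalTuple m n).filter (fun k ↦ ∃ i, 2 ≤ k i) = ∅ by simp [this]
    refine filter_eq_empty_iff.2 fun k hk ⟨i, hi⟩ ↦ ?_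
    have := single_le_sum (fun j _ ↦ Nat.zero_le (k j)) (mem_univ i)
    rw [Nat.mem_antidiagonalTuple.1 hk] at this
    omega
  · calc _ ≤ _ := card_le_card (filter_exists_two_le_subset_biUnion m n)
      _ ≤ ∑ i : Fin m, #((Nat.antidiagonalTuple m n).image (· + Pi.single i 2)) := card_biUnion_le
      _ ≤ ∑ _i : Fin m, m ^ n :=
        sum_le_sum fun i _ ↦ card_image_le.trans (card_antidiagonalTuple_le m n)
      _ = m ^ (n + 2 - 1) := by simp [pow_succ']

theorem multinomial_double_factorial_bound_general (p m : ℕ) :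
    ∑ k ∈ Finset.Nat.antidiagonalTuple m p,
      Nat.multinomial Finset.univ k * ((∏ i, oddDoubleFactorial (k i)) - 1)
    ≤ 4 ^ p * Nat.factorial p * m ^ (p - 1) := by
  set S := (Nat.antidiagonalTuple m p).filter (fun k ↦ ∃ i, 2 ≤ k i)
  have hsupport : ∀ k ∈ Nat.antidiagonalTuple m p,
      Nat.multinomial univ k * ((∏ i, oddDoubleFactorial (k i)) - 1) ≠ 0 → ∃ i, 2 ≤ k i := by
    intro k _ hk
    by_contra! hle
    simp [prod_eq_one fun i _ ↦ oddDoubleFactorial_eq_one (Nat.le_of_lt_succ (hle i))] at hk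
  have hterm : ∀ k ∈ S, Nat.multinomial univ k * ((∏ i, oddDoubleFactorial (k i)) - 1)
      ≤ 2 ^ p * p.factorial := by
    intro k hk
    have hsum := Nat.mem_antidiagonalTuple.1 (mem_filter.1 hk).1
    calc _ ≤ Nat.multinomial univ k * ∏ i, oddDoubleFactorial (k i) :=
          Nat.mul_le_mul_left _ (Nat.sub_le _ _)
      _ ≤ _ := hsum ▸ multinomial_mul_prod_oddDoubleFactorial_le univ k
  rw [← sum_filter_of_ne hsupport]
  calc _ ≤ #S * (2 ^ p * p.factorial) := by simpa using sum_le_card_nsmul S _ _ hterm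
    _ ≤ m ^ (p - 1) * (2 ^ p * p.factorial) := by gcongr; exact card_filter_exists_two_le m p
    _ = 2 ^ p * p.factorial * m ^ (p - 1) := by ring
    _ ≤ 4 ^ p * p.factorial * m ^ (p - 1) := by gcongr; norm_num

/-- For all integers `p ≥ 1` and `m > p`, the sum over all multi-indices
`(k_1, …, k_m)` of nonnegative integers with `k_1 + ⋯ + k_m = p` of the multinomial
coefficient `p! / (k_1! ⋯ k_m!)` times `(∏_{i=1}^m (2 k_i - 1)!! - 1)` is at most
`4^p ⋅ p! ⋅ m^(p-1)`. -/
theorem multinomial_double_factorial_bound (p m : ℕ) (hp : 1 ≤ p) (hm : p < m) :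
    ∑ k ∈ Finset.Nat.antidiagonalTuple m p,
      Nat.multinomial Finset.univ k * ((∏ i, oddDoubleFactorial (k i)) - 1)
    ≤ 4 ^ p * Nat.factorial p * m ^ (p - 1) :=
  multinomial_double_factorial_bound_general p m
end

section
/- Let X be a semimartingale on [0,T] and τ a stopping time such that X_t = f(t) almost surely for all t < τ, where f : [0,T] → ℝ is a deterministic function. If ℚ(τ ≥ t*) > 0 for some t* ∈ [0,T], then f is of finite variation on [0,t*]. -/
/-!
Test the semimartingale property against the deterministic integrand
`sign (f v_{i+1} - f v_i)` on a partition `0 = v_0 ≤ ⋯ ≤ v_m < t*`. On the event `{τ ≥ t*}`, which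
has positive probability, `X` agrees with `f` on the partition, so the elementary integral equals
the variation of `f` along it. Boundedness in probability gives a `C` such that every elementary
integral is `≤ C` somewhere on this event, which bounds the variation of `f` on `[0, t*)` by `C`;
closing the interval at `t*` only adds the jump of `f` from its left limit.
-/

open MeasureTheory

/-- The elementary stochastic integral `∑_i h_i (X_{u_i} - X_{u_{i-1}})` of a simple
predictable integrand given by grid points `u` and `ℱ_{u_{i-1}}`-measurable coefficients
`h_i`. -/
noncomputable def elemIntegral {Ω : Type*} (X : ℝ → Ω → ℝ) {n : ℕ}
    (u : Fin (n + 1) → ℝ) (h : Fin n → Ω → ℝ) (ω : Ω) : ℝ :=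
  ∑ i : Fin n, h i ω * (X (u i.succ) ω - X (u i.castSucc) ω)

open Set Filter

section Variation

variable {α E : Type*} [LinearOrder α]

lemma eVariationOn_le_of_isLeast [PseudoEMetricSpace E] {f : α → E} {s : Set α} {a : α}
    (ha : IsLeast s a) {C : ENNReal}
    (h : ∀ v : ℕ → α, Monotone v → (∀ i, v i ∈ s) → v 0 = a →
      ∀ m, ∑ i ∈ Finset.range m, edist (f (v (i + 1))) (f (v i)) ≤ C) :
    eVariationOn f s ≤ C := by
  refine iSup_le fun ⟨n, u, hu, us⟩ => ?_
  obtain ⟨v, m, hv, vs, ⟨k, -, hvk⟩, hle⟩ := eVariationOn.add_point f ha.1 u hu us n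
  have hv0 : v 0 = a := le_antisymm (hvk ▸ hv (Nat.zero_le k)) (ha.2 (vs 0))
  exact hle.trans (h v hv vs hv0 m)

lemma BoundedVariationOn.Icc_of_Ico [TopologicalSpace α] [OrderTopology α] [DenselyOrdered α]
    [PseudoMetricSpace E] [CompleteSpace E] {f : α → E} {a b : α} (hab : a < b)
    (hf : BoundedVariationOn f (Ico a b)) :
    BoundedVariationOn f (Icc a b) := by
  obtain ⟨l, hl⟩ := hf.exists_tendsto_left b
  have hIco : Icc a b ∩ Iio b = Ico a b :=
    Set.ext fun _ => ⟨fun h => ⟨h.1.1, h.2⟩, fun h => ⟨⟨h.1, h.2.le⟩, h.2⟩⟩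
  have hsplit := eVariationOn.eVariationOn_on_inter_Iic_eq_Iio_add_edist (f := f) (l := l)
    (by rw [hIco]; exact right_nhdsWithin_Ico_neBot hab) (right_mem_Icc.2 hab.le)
    (by rwa [hIco, ← inter_eq_left.2 (Ico_subset_Iio_self (a := a) (b := b))])
  rw [inter_eq_left.2 Icc_subset_Iic_self, hIco] at hsplit
  rw [BoundedVariationOn, hsplit]
  exact ENNReal.add_ne_top.2 ⟨hf, edist_ne_top _ _⟩

end Variation

section BoundedInProbability

variable {Ω : Type*} [MeasurableSpace Ω]

def BoundedInProbability (Q : Measure Ω) (S : Set (Ω → ℝ)) : Prop :=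
  ∀ ε : ℝ, 0 < ε → ∃ C : ℝ, ∀ Y ∈ S, Q {ω | C < |Y ω|} ≤ ENNReal.ofReal ε

lemma BoundedInProbability.exists_frequently_abs_le {Q : Measure Ω} [IsFiniteMeasure Q]
    {S : Set (Ω → ℝ)} (hS : BoundedInProbability Q S) {A : Set Ω} (hA : 0 < Q A) :
    ∃ C : ℝ, ∀ Y ∈ S, ∃ᵐ ω ∂Q, ω ∈ A ∧ |Y ω| ≤ C := by
  have hA_top : Q A ≠ ⊤ := measure_ne_top Q A
  obtain ⟨C, hC⟩ := hS ((Q A).toReal / 2) (by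
    have := ENNReal.toReal_pos hA.ne' hA_top
    positivity)
  refine ⟨C, fun Y hY hnot => ?_⟩
  have hAC : ∀ᵐ ω ∂Q, ω ∈ A → ω ∈ {ω | C < |Y ω|} := by
    filter_upwards [hnot] with ω hω hωA
    exact not_le.1 fun h => hω ⟨hωA, h⟩
  have hhalf : ENNReal.ofReal ((Q A).toReal / 2) = Q A / 2 := by
    rw [ENNReal.ofReal_div_of_pos two_pos, ENNReal.ofReal_toReal hA_top, ENNReal.ofReal_ofNat]
  have := (measure_mono_ae hAC).trans (hC Y hY)
  rw [hhalf] at this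
  exact (ENNReal.half_lt_self hA.ne' hA_top).not_ge this

end BoundedInProbability

lemma elemIntegral_eq_sum_range {Ω : Type*} (X : ℝ → Ω → ℝ) (g : ℕ → ℝ) (c : ℕ → Ω → ℝ) (n : ℕ)
    (ω : Ω) :
    elemIntegral X (fun j : Fin (n + 1) => g j) (fun i : Fin n => c i) ω =
      ∑ i ∈ Finset.range n, c i ω * (X (g (i + 1)) ω - X (g i) ω) :=
  Fin.sum_univ_eq_sum_range (fun i => c i ω * (X (g (i + 1)) ω - X (g i) ω)) n

-- The witness: the integrand `sign (f v_{i+1} - f v_i)` on `(v_i, v_{i+1}]`, extended by `0`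
-- on `(v_m, t]`.
lemma exists_elemIntegral_eq_sum_abs {Ω : Type*} (X : ℝ → Ω → ℝ) (f : ℝ → ℝ) {t : ℝ}
    (v : ℕ → ℝ) (hv : Monotone v) (hv0 : v 0 = 0) (hvt : ∀ i, v i ≤ t) (m : ℕ) :
    ∃ (n : ℕ) (u : Fin (n + 1) → ℝ) (c : Fin n → ℝ), Monotone u ∧ u 0 = 0 ∧
      u (Fin.last n) = t ∧ (∀ i, |c i| ≤ 1) ∧
      ∀ ω, (∀ i ≤ m, X (v i) ω = f (v i)) →
        elemIntegral X u (fun i _ => c i) ω =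
          ∑ i ∈ Finset.range m, |f (v (i + 1)) - f (v i)| := by
  set g : ℕ → ℝ := fun j => if j ≤ m then v j else t
  set c : ℕ → ℝ := fun i => if i < m then (SignType.sign (f (v (i + 1)) - f (v i)) : ℝ) else 0
  have hg : Monotone g := by
    intro a b hab
    simp only [g]
    split_ifs <;> first | exact hv hab | exact hvt a | exact le_rfl | omega
  refine ⟨m + 1, fun j => g j, fun i => c i, fun a b hab => hg hab, by simp [g, hv0],
    by simp [g], fun i => ?_, fun ω hX => ?_⟩
  · simp only [c]
    split_ifs
    · rcases SignType.sign (f (v (i + 1)) - f (v i)) with _ | _ | _ <;> simp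
    · simp
  · rw [elemIntegral_eq_sum_range X g (fun i _ => c i), Finset.sum_range_succ]
    simp only [c, lt_irrefl, if_false, zero_mul, add_zero]
    refine Finset.sum_congr rfl fun i hi => ?_
    have hi : i < m := Finset.mem_range.1 hi
    simp only [g, if_pos hi, if_pos hi.le, if_pos (Nat.succ_le_of_lt hi), hX i hi.le,
      hX (i + 1) hi, sign_mul_self]

theorem finite_variation_of_semimartingale_frozen_general
    {Ω : Type*} {m0 : MeasurableSpace Ω} (Q : Measure Ω) [IsProbabilityMeasure Q]
    (ℱ : Filtration ℝ m0) (T : ℝ) (tstar : ℝ) (htstar : 0 < tstar) (hT : tstar ≤ T)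
    (X : ℝ → Ω → ℝ)
    -- `X` is a semimartingale: elementary integrals with `|h| ≤ 1` are bounded in
    -- probability
    (hsemi : ∀ ε : ℝ, 0 < ε → ∃ C : ℝ, ∀ (n : ℕ) (u : Fin (n + 1) → ℝ)
      (h : Fin n → Ω → ℝ),
      Monotone u → u 0 = 0 → u (Fin.last n) = tstar →
      (∀ i : Fin n, StronglyMeasurable[ℱ (u i.castSucc)] (h i)) →
      (∀ (i : Fin n) (ω : Ω), |h i ω| ≤ 1) →
      Q {ω | C < |elemIntegral X u h ω|} ≤ ENNReal.ofReal ε)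
    (τ : Ω → ℝ)
    (f : ℝ → ℝ)
    (hfrozen : ∀ t : ℝ, 0 ≤ t → t ≤ T → ∀ᵐ ω ∂Q, t < τ ω → X t ω = f t)
    (hpos : 0 < Q {ω | tstar ≤ τ ω}) :
    BoundedVariationOn f (Set.Icc 0 tstar) := by
  set S : Set (Ω → ℝ) := {Y | ∃ (n : ℕ) (u : Fin (n + 1) → ℝ) (c : Fin n → ℝ), Monotone u ∧
    u 0 = 0 ∧ u (Fin.last n) = tstar ∧ (∀ i, |c i| ≤ 1) ∧ Y = elemIntegral X u fun i _ => c i}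
  have hS : BoundedInProbability Q S := fun ε hε => by
    obtain ⟨C, hC⟩ := hsemi ε hε
    refine ⟨C, ?_⟩
    rintro _ ⟨n, u, c, hu, hu0, hut, hc, rfl⟩
    exact hC n u _ hu hu0 hut (fun _ => stronglyMeasurable_const) fun i _ => hc i
  obtain ⟨C, hC⟩ := hS.exists_frequently_abs_le hpos
  refine BoundedVariationOn.Icc_of_Ico htstar
    (ne_top_of_le_ne_top (ENNReal.ofReal_ne_top (r := C))
      (eVariationOn_le_of_isLeast (isLeast_Ico htstar) fun v hv hvs hv0 m => ?_))
  obtain ⟨n, u, c, hu, hu0, hut, hc, hY⟩ :=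
    exists_elemIntegral_eq_sum_abs X f v hv hv0 (fun i => (hvs i).2.le) m
  have hgrid : ∀ᵐ ω ∂Q, ∀ i, v i < τ ω → X (v i) ω = f (v i) :=
    ae_all_iff.2 fun i => hfrozen (v i) (hvs i).1 ((hvs i).2.le.trans hT)
  obtain ⟨ω, ⟨hωτ, hωC⟩, hωX⟩ :=
    ((hC _ ⟨n, u, c, hu, hu0, hut, hc, rfl⟩).and_eventually hgrid).exists
  have hvar : ∑ i ∈ Finset.range m, |f (v (i + 1)) - f (v i)| ≤ C :=
    hY ω (fun i _ => hωX i ((hvs i).2.trans_le hωτ)) ▸ (le_abs_self _).trans hωC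
  simp only [edist_dist, Real.dist_eq]
  rw [← ENNReal.ofReal_sum_of_nonneg fun _ _ => abs_nonneg _]
  exact ENNReal.ofReal_le_ofReal hvar

/-- If `X` is a semimartingale (in the Bichteler–Dellacherie sense: the family of
elementary stochastic integrals of predictable integrands bounded by `1` on `[0, t*]` is
bounded in probability) and `τ` is a stopping time such that a.s. `X_t = f(t)` for all
`t < τ` with `f` deterministic, then `Q(τ ≥ t*) > 0` implies that `f` is of finite
variation on `[0, t*]`. -/
theorem finite_variation_of_semimartingale_frozen
    {Ω : Type*} {m0 : MeasurableSpace Ω} (Q : Measure Ω) [IsProbabilityMeasure Q]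
    (ℱ : Filtration ℝ m0) (T : ℝ) (tstar : ℝ) (htstar : 0 < tstar) (hT : tstar ≤ T)
    (X : ℝ → Ω → ℝ)
    -- `X` is a semimartingale: elementary integrals with `|h| ≤ 1` are bounded in
    -- probability
    (hsemi : ∀ ε : ℝ, 0 < ε → ∃ C : ℝ, ∀ (n : ℕ) (u : Fin (n + 1) → ℝ)
      (h : Fin n → Ω → ℝ),
      Monotone u → u 0 = 0 → u (Fin.last n) = tstar →
      (∀ i : Fin n, StronglyMeasurable[ℱ (u i.castSucc)] (h i)) →
      (∀ (i : Fin n) (ω : Ω), |h i ω| ≤ 1) →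
      Q {ω | C < |elemIntegral X u h ω|} ≤ ENNReal.ofReal ε)
    (τ : Ω → ℝ) (hτ : IsStoppingTime ℱ (fun ω => (τ ω : WithTop ℝ)))
    (f : ℝ → ℝ)
    (hfrozen : ∀ t : ℝ, 0 ≤ t → t ≤ T → ∀ᵐ ω ∂Q, t < τ ω → X t ω = f t)
    (hpos : 0 < Q {ω | tstar ≤ τ ω}) :
    BoundedVariationOn f (Set.Icc 0 tstar) :=
  finite_variation_of_semimartingale_frozen_general Q ℱ T tstar htstar hT X hsemi τ f hfrozen hpos
end

section
/- Let M be a continuous local martingale on [0,T], let t* > 0, and let B be an atom of F_{t*} (or of F_{t*-}). Then almost surely M_t = M_0 on B for all t < t*. -/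
open MeasureTheory Filter

/-- `M` is a local martingale on the filtration `ℱ`: there is a nondecreasing sequence of
stopping times tending to infinity such that each stopped process is a martingale. -/
def IsLocalMartingale {Ω : Type*} {m0 : MeasurableSpace Ω} (μ : Measure Ω)
    (ℱ : Filtration ℝ m0) (M : ℝ → Ω → ℝ) : Prop :=
  ∃ τ : ℕ → Ω → ℝ,
    (∀ n, IsStoppingTime ℱ (fun ω => (τ n ω : WithTop ℝ))) ∧
    (∀ ω, Monotone fun n => τ n ω) ∧
    (∀ ω, Tendsto (fun n => τ n ω) atTop atTop) ∧
    (∀ n, Martingale (MeasureTheory.stoppedProcess M (fun ω => (τ n ω : WithTop ℝ))) ℱ μ)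

/-- `B` is an atom of the σ-algebra `m'` under `μ`. -/
def IsMeasAtom {Ω : Type*} {m0 : MeasurableSpace Ω} (μ : Measure Ω) (m' : MeasurableSpace Ω) (B : Set Ω) : Prop :=
  MeasurableSet[m'] B ∧ ∀ B' : Set Ω, MeasurableSet[m'] B' → B' ⊆ B → μ B' = 0 ∨ μ B' = μ B

open Topology Set

/-! Localize: on `B` almost surely some localizing time `τₙ` is at least `t*` (the events
`{τₙ ≤ s}`, `s < t*`, are trivial on `B`), so `M` agrees there with the continuous martingale
`N = M^{τₙ}` before `t*`. As `B` is an atom, every `N s` with `s < t*` is a.s. constant on `B`,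
hence almost every path of `N` on `B` follows one deterministic continuous path `F` up to `t*`.

Such an `F` is constant. For `u ≤ v`, let `σ` be the first time after `u` at which `N` leaves `F`,
capped at `v`. Optional sampling (along discretisations of `σ` from above, with uniform
integrability to pass to the limit) gives `E[N_σ - N_u] = 0`; the integrand vanishes where `N` has
left `F` before `u`, equals `F v - F u` where `N` follows `F` up to `v`, and is bounded by the
oscillation of `F` on `[u, v]` elsewhere. Writing `m s` for the probability that `N` follows `F` up
to `s`, this gives `|F v - F u| m v ≤ osc_{[u,v]} F · (m u - m v)`; summing over a fine partition of
`[0, t]` yields `|F t - F 0| m t ≤ ε` for every `ε > 0`, while `m t ≥ μ B > 0`. -/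

lemma eq_of_forall_rat_lt {f g : ℝ → ℝ} (hf : Continuous f) (hg : Continuous g) {s : ℝ}
    (h : ∀ q : ℚ, (q : ℝ) < s → f q = g q) {t : ℝ} (ht : t ≤ s) : f t = g t := by
  have hsub : Iic s ⊆ closure (Iio s ∩ range ((↑) : ℚ → ℝ)) := by
    rw [← closure_Iio]
    exact closure_minimal (Rat.denseRange_cast.open_subset_closure_inter isOpen_Iio)
      isClosed_closure
  refine Set.EqOn.closure ?_ hf hg (hsub ht)
  rintro _ ⟨hlt, q, rfl⟩
  exact h q hlt

lemma eq_of_forall_abs_sub_mul_le {F m : ℝ → ℝ} {a b : ℝ} (hab : a ≤ b)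
    (hF : ContinuousOn F (Icc a b)) (hm : Antitone m) (hmb : 0 < m b)
    (hloc : ∀ u v ε, a ≤ u → u ≤ v → v ≤ b → (∀ r ∈ Icc u v, |F r - F u| ≤ ε) →
      |F v - F u| * m v ≤ ε * (m u - m v)) :
    F b = F a := by
  have hbound : ∀ ε > 0, |F b - F a| * m b ≤ ε * (m a - m b) := by
    intro ε hε
    obtain ⟨δ, hδ, hUC⟩ :=
      Metric.uniformContinuousOn_iff.1 (isCompact_Icc.uniformContinuousOn_of_continuous hF) ε hε
    have hstep : ∀ n : ℕ, ∀ v ∈ Icc a b, v ≤ a + n * (δ / 2) →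
        |F v - F a| * m v ≤ ε * (m a - m v) := by
      intro n
      induction n with
      | zero =>
        intro v hv hva
        obtain rfl : v = a := le_antisymm (by simpa using hva) hv.1
        simp
      | succ n ih =>
        intro v hv hvn
        by_cases hle : v ≤ a + n * (δ / 2)
        · exact ih v hv hle
        set w := a + n * (δ / 2)
        have hwv : w ≤ v := (not_le.1 hle).le
        have hw : w ∈ Icc a b := ⟨le_add_of_nonneg_right (by positivity), hwv.trans hv.2⟩
        have hosc : ∀ r ∈ Icc w v, |F r - F w| ≤ ε := fun r hr => by
          refine (hUC r ⟨hw.1.trans hr.1, hr.2.trans hv.2⟩ w hw ?_).le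
          push_cast at hvn
          rw [Real.dist_eq, abs_of_nonneg (sub_nonneg.2 hr.1)]
          linarith [hr.2, show w = a + n * (δ / 2) from rfl]
        have hmv : 0 ≤ m v := hmb.le.trans (hm hv.2)
        calc |F v - F a| * m v ≤ |F w - F a| * m v + |F v - F w| * m v := by
              rw [← add_mul]
              gcongr
              exact abs_sub_le _ _ _ |>.trans_eq (add_comm _ _)
          _ ≤ |F w - F a| * m w + |F v - F w| * m v := by gcongr; exact hm hwv
          _ ≤ ε * (m a - m w) + ε * (m w - m v) :=
              add_le_add (ih w hw le_rfl) (hloc w v ε hw.1 hwv hv.2 hosc)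
          _ = ε * (m a - m v) := by ring
    obtain ⟨n, hn⟩ := exists_nat_gt ((b - a) / (δ / 2))
    refine hstep n b ⟨hab, le_rfl⟩ ?_
    rw [div_lt_iff₀ (by positivity)] at hn
    linarith
  have hlim : Tendsto (fun ε => ε * (m a - m b)) (𝓝[>] 0) (𝓝 0) := by
    simpa using ((tendsto_id (x := 𝓝 (0 : ℝ))).mul_const (m a - m b)).mono_left
      nhdsWithin_le_nhds
  have hzero : |F b - F a| * m b ≤ 0 :=
    ge_of_tendsto hlim (eventually_nhdsWithin_of_forall fun ε hε => hbound ε hε)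
  have := abs_nonpos_iff.1 (nonpos_of_mul_nonpos_left hzero hmb)
  linarith

section ZeroOne

variable {Ω : Type*} {m0 : MeasurableSpace Ω} {ν : Measure Ω}

lemma exists_ae_eq_const_of_measure_eq_zero_or_compl {β : Type*} [MeasurableSpace β] [Nonempty β]
    [MeasurableSpace.CountablySeparated β] {m : MeasurableSpace Ω}
    (hν : ∀ A, MeasurableSet[m] A → ν A = 0 ∨ ν Aᶜ = 0) {X : Ω → β} (hX : Measurable[m] X) :
    ∃ c, X =ᵐ[ν] fun _ => c :=
  exists_eventuallyEq_const_of_forall_separating MeasurableSet fun _ hU =>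
    (hν _ (hX hU)).symm.imp ae_iff.2 measure_eq_zero_iff_ae_notMem.1

lemma exists_ae_le_of_isStoppingTime {ℱ : Filtration ℝ m0} {τ : ℕ → Ω → ℝ} {T : ℝ}
    (hτ : ∀ n, IsStoppingTime ℱ fun ω => (τ n ω : WithTop ℝ))
    (hτ_tendsto : ∀ ω, Tendsto (τ · ω) atTop atTop)
    (hν : ∀ s < T, ∀ A, MeasurableSet[ℱ s] A → ν A = 0 ∨ ν Aᶜ = 0) :
    ∃ n, ∀ᵐ ω ∂ν, T ≤ τ n ω := by
  by_contra! h
  have hlt : ∀ n, ∀ᵐ ω ∂ν, τ n ω < T := by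
    intro n
    have hpos : ν {ω | τ n ω < T} ≠ 0 := frequently_ae_iff.1 (by simpa using h n)
    obtain ⟨q, hq⟩ : ∃ q : {q : ℚ // (q : ℝ) < T}, ν {ω | τ n ω ≤ q} ≠ 0 := by
      by_contra! hnull
      refine hpos (measure_mono_null (fun ω hω => ?_) (measure_iUnion_null hnull))
      obtain ⟨q, hωq, hqT⟩ := exists_rat_btwn (show τ n ω < T from hω)
      exact mem_iUnion.2 ⟨⟨q, hqT⟩, hωq.le⟩
    have hmeas : MeasurableSet[ℱ q] {ω | τ n ω ≤ q} := by simpa using hτ n q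
    have hle : ∀ᵐ ω ∂ν, τ n ω ≤ q := ae_iff.2 ((hν q q.2 _ hmeas).resolve_left hq)
    exact hle.mono fun ω hω => hω.trans_lt q.2
  have hfalse : ∀ᵐ ω ∂ν, False := by
    filter_upwards [ae_all_iff.2 hlt] with ω hω
    obtain ⟨n, hn⟩ := ((hτ_tendsto ω).eventually_ge_atTop T).exists
    exact (hn.trans_lt (hω n)).false
  exact h 0 (hfalse.mono fun _ h => h.elim)

lemma exists_continuous_ae_eq_of_stronglyAdapted {ℱ : Filtration ℝ m0} {X : ℝ → Ω → ℝ}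
    (hX : StronglyAdapted ℱ X) (hXc : ∀ ω, Continuous (X · ω)) {T : ℝ}
    (hν : ∀ s < T, ∀ A, MeasurableSet[ℱ s] A → ν A = 0 ∨ ν Aᶜ = 0) :
    ∃ F : ℝ → ℝ, Continuous F ∧ ∀ᵐ ω ∂ν, ∀ t < T, X t ω = F t := by
  have hconst : ∀ q : {q : ℚ // (q : ℝ) < T}, ∃ c, X q =ᵐ[ν] fun _ => c := fun q =>
    exists_ae_eq_const_of_measure_eq_zero_or_compl (hν q q.2) (hX q).measurable
  choose c hc using hconst
  rcases eq_or_ne ν 0 with rfl | hν0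
  · exact ⟨0, continuous_const, by simp⟩
  have := ae_neBot.2 hν0
  obtain ⟨ω₀, hω₀⟩ := (ae_all_iff.2 hc).exists
  refine ⟨(X · ω₀), hXc ω₀, ?_⟩
  filter_upwards [ae_all_iff.2 hc] with ω hω t ht
  refine eq_of_forall_rat_lt (hXc ω) (hXc ω₀) (fun q hq => ?_) le_rfl
  have hqT : (q : ℝ) < T := hq.trans ht
  exact (hω ⟨q, hqT⟩).trans (hω₀ ⟨q, hqT⟩).symm

end ZeroOne

section AgreeUpTo

variable {Ω : Type*} {m0 : MeasurableSpace Ω}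

def agreeUpTo (N : ℝ → Ω → ℝ) (F : ℝ → ℝ) (s : ℝ) : Set Ω :=
  {ω | ∀ r ≤ s, N r ω = F r}

lemma agreeUpTo_anti (N : ℝ → Ω → ℝ) (F : ℝ → ℝ) : Antitone (agreeUpTo N F) :=
  fun _ _ hst _ hω r hr => hω r (hr.trans hst)

lemma measurableSet_agreeUpTo {ℱ : Filtration ℝ m0} {N : ℝ → Ω → ℝ} {F : ℝ → ℝ}
    (hN : StronglyAdapted ℱ N) (hNc : ∀ ω, Continuous (N · ω)) (hF : Continuous F) (s : ℝ) :
    MeasurableSet[ℱ s] (agreeUpTo N F s) := by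
  have hrat : agreeUpTo N F s = ⋂ q ∈ {q : ℚ | (q : ℝ) < s}, {ω | N q ω = F q} := by
    ext ω
    simp only [agreeUpTo, mem_ofPred_eq, mem_iInter]
    exact ⟨fun h q hq => h q hq.le, fun h r hr => eq_of_forall_rat_lt (hNc ω) hF h hr⟩
  rw [hrat]
  exact MeasurableSet.biInter (to_countable _) fun q hq =>
    ℱ.mono (le_of_lt hq) _ ((hN q).measurable (measurableSet_singleton (F q)))

end AgreeUpTo

section ExitTime

variable {Ω : Type*} {m0 : MeasurableSpace Ω} {D : ℝ → Set Ω} {u v : ℝ}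

open Classical in
noncomputable def exitStep (D : ℝ → Set Ω) (v r : ℝ) (ω : Ω) : ℝ :=
  if ω ∈ D r then v else r

noncomputable def exitGrid (u v : ℝ) (k : ℕ) : ℝ :=
  max u (min (Denumerable.ofNat ℚ k) v)

lemma le_exitGrid (k : ℕ) : u ≤ exitGrid u v k := le_max_left _ _

lemma exitGrid_le (huv : u ≤ v) (k : ℕ) : exitGrid u v k ≤ v := max_le huv (min_le_right _ _)

/-- Discretisations from above of the exit time from `D` after `u`, capped at `v`, along the finite
sets `{u} ∪ {exitGrid u v j | j < k}`, which increase to a dense subset of `[u, v]`. -/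
noncomputable def exitApprox (D : ℝ → Set Ω) (u v : ℝ) : ℕ → Ω → ℝ
  | 0, ω => exitStep D v u ω
  | k + 1, ω => min (exitApprox D u v k ω) (exitStep D v (exitGrid u v k) ω)

lemma exitApprox_succ_le (k : ℕ) (ω : Ω) : exitApprox D u v (k + 1) ω ≤ exitApprox D u v k ω :=
  min_le_left _ _

lemma exitApprox_antitone (ω : Ω) : Antitone (exitApprox D u v · ω) :=
  antitone_nat_of_succ_le fun k => exitApprox_succ_le k ω

lemma exitApprox_le_exitStep_left (k : ℕ) (ω : Ω) : exitApprox D u v k ω ≤ exitStep D v u ω :=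
  exitApprox_antitone ω (Nat.zero_le k)

lemma exitApprox_le_exitStep_grid {j k : ℕ} (hjk : j < k) (ω : Ω) :
    exitApprox D u v k ω ≤ exitStep D v (exitGrid u v j) ω :=
  (exitApprox_antitone ω hjk).trans (min_le_right _ _)

lemma exitApprox_le (huv : u ≤ v) (k : ℕ) (ω : Ω) : exitApprox D u v k ω ≤ v := by
  refine (exitApprox_le_exitStep_left k ω).trans ?_
  unfold exitStep; split_ifs <;> simp [huv]

lemma le_exitApprox (huv : u ≤ v) (k : ℕ) (ω : Ω) : u ≤ exitApprox D u v k ω := by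
  have hstep : ∀ r, u ≤ r → u ≤ exitStep D v r ω := fun r hr => by
    unfold exitStep; split_ifs <;> assumption
  induction k with
  | zero => exact hstep u le_rfl
  | succ k ih => exact le_min ih (hstep _ (le_exitGrid k))

lemma countable_range_exitApprox (k : ℕ) : (range (exitApprox D u v k)).Countable := by
  set S := insert u (insert v (range (exitGrid u v)))
  have hstep : ∀ ω, ∀ r ∈ S, exitStep D v r ω ∈ S := fun ω r hr => by
    unfold exitStep; split_ifs
    exacts [mem_insert_of_mem _ (mem_insert _ _), hr]
  refine (((countable_range (exitGrid u v)).insert v).insert u).mono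
    (range_subset_iff.2 fun ω => ?_)
  induction k with
  | zero => exact hstep ω u (mem_insert _ _)
  | succ k ih =>
    rcases min_choice (exitApprox D u v k ω) (exitStep D v (exitGrid u v k) ω) with h | h <;>
      simp only [exitApprox, h]
    exacts [ih, hstep ω _ (mem_insert_of_mem _ (mem_insert_of_mem _ (mem_range_self k)))]

lemma isStoppingTime_exitStep {ℱ : Filtration ℝ m0} (hD : ∀ s, MeasurableSet[ℱ s] (D s)) {r : ℝ}
    (hrv : r ≤ v) : IsStoppingTime ℱ fun ω => (exitStep D v r ω : WithTop ℝ) := by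
  intro t
  simp only [WithTop.coe_le_coe]
  by_cases hvt : v ≤ t
  · convert MeasurableSet.univ
    ext ω; by_cases h : ω ∈ D r <;> simp [exitStep, h] <;> linarith
  by_cases hrt : r ≤ t
  · convert ℱ.mono hrt _ (hD r).compl
    ext ω; by_cases h : ω ∈ D r <;> simp [exitStep, h, hvt, hrt]
  · convert MeasurableSet.empty
    ext ω; by_cases h : ω ∈ D r <;> simp [exitStep, h] <;> linarith

lemma isStoppingTime_exitApprox {ℱ : Filtration ℝ m0} (hD : ∀ s, MeasurableSet[ℱ s] (D s))
    (huv : u ≤ v) (k : ℕ) : IsStoppingTime ℱ fun ω => (exitApprox D u v k ω : WithTop ℝ) := by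
  induction k with
  | zero => exact isStoppingTime_exitStep hD huv
  | succ k ih =>
    simp only [exitApprox, WithTop.coe_min]
    exact ih.min (isStoppingTime_exitStep hD (exitGrid_le huv k))

lemma exitApprox_of_notMem (huv : u ≤ v) {ω : Ω} (hω : ω ∉ D u) (k : ℕ) :
    exitApprox D u v k ω = u :=
  le_antisymm ((exitApprox_le_exitStep_left k ω).trans (by simp [exitStep, hω]))
    (le_exitApprox huv k ω)

lemma exitApprox_of_mem (hD : Antitone D) (huv : u ≤ v) {ω : Ω} (hω : ω ∈ D v) (k : ℕ) :
    exitApprox D u v k ω = v := by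
  have hstep : ∀ r ≤ v, exitStep D v r ω = v := fun r hr => by simp [exitStep, hD hr hω]
  induction k with
  | zero => exact hstep u huv
  | succ k ih =>
    rw [exitApprox, ih, hstep _ (exitGrid_le huv k), min_self]

lemma mem_of_lt_iInf_exitApprox (hD : Antitone D) (huv : u ≤ v) {ω : Ω} {x : ℝ} (hux : u < x)
    (hx : x < ⨅ k, exitApprox D u v k ω) : ω ∈ D x := by
  have hbdd : BddBelow (range (exitApprox D u v · ω)) :=
    ⟨u, by rintro _ ⟨k, rfl⟩; exact le_exitApprox huv k ω⟩
  obtain ⟨q, hxq, hq⟩ := exists_rat_btwn hx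
  have hqv : (q : ℝ) ≤ v := hq.le.trans ((ciInf_le hbdd 0).trans (exitApprox_le huv 0 ω))
  obtain ⟨k, hk⟩ := (Denumerable.eqv ℚ).symm.surjective q
  have hgrid : exitGrid u v k = q := by
    rw [exitGrid, show Denumerable.ofNat ℚ k = q from hk, min_eq_left hqv,
      max_eq_right (hux.trans hxq).le]
  refine hD hxq.le (by_contra fun hqD => ?_)
  have := (ciInf_le hbdd _).trans (exitApprox_le_exitStep_grid (Nat.lt_succ_self k) ω)
  rw [hgrid, exitStep, if_neg hqD] at this
  exact this.not_gt hq

end ExitTime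

namespace MeasureTheory

variable {Ω : Type*} {m0 : MeasurableSpace Ω} {μ : Measure Ω} [IsFiniteMeasure μ]

lemma abs_mul_measureReal_le_of_integral_eq_zero {g : Ω → ℝ}
    (hg : Integrable g μ) (h0 : ∫ ω, g ω ∂μ = 0) {A B : Set Ω} (hB : MeasurableSet B)
    (hBA : B ⊆ A) {c ε : ℝ} (hoff : ∀ ω ∉ A, g ω = 0) (hc : ∀ ω ∈ B, g ω = c)
    (hε : ∀ ω ∈ A \ B, |g ω| ≤ ε) :
    |c| * μ.real B ≤ ε * μ.real (A \ B) := by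
  have hsplit : c * μ.real B + ∫ ω in A \ B, g ω ∂μ = 0 := by
    rw [← h0, ← setIntegral_eq_integral_of_forall_compl_eq_zero (μ := μ) hoff,
      ← integral_inter_add_sdiff (s := A) hB hg.integrableOn, inter_eq_right.2 hBA,
      setIntegral_congr_fun hB hc, setIntegral_const, smul_eq_mul, mul_comm]
  calc |c| * μ.real B = ‖∫ ω in A \ B, g ω ∂μ‖ := by
        rw [Real.norm_eq_abs, eq_neg_of_add_eq_zero_right hsplit, abs_neg, abs_mul,
          abs_of_nonneg measureReal_nonneg]
    _ ≤ ε * μ.real (A \ B) := norm_setIntegral_le_of_norm_le_const (measure_lt_top _ _) hε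

lemma Martingale.integrable_and_integral_eq_of_tendsto {ℱ : Filtration ℝ m0} {N : ℝ → Ω → ℝ}
    (hN : Martingale N ℱ μ) {ρ : ℕ → Ω → ℝ} {v : ℝ}
    (hρ : ∀ k, IsStoppingTime ℱ fun ω => (ρ k ω : WithTop ℝ)) (hρv : ∀ k ω, ρ k ω ≤ v)
    (hρc : ∀ k, (range (ρ k)).Countable) {X : Ω → ℝ}
    (hX : ∀ᵐ ω ∂μ, Tendsto (fun k => N (ρ k ω) ω) atTop (𝓝 (X ω))) :
    Integrable X μ ∧ ∫ ω, X ω ∂μ = ∫ ω, N v ω ∂μ := by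
  have hle : ∀ k, (hρ k).measurableSpace ≤ m0 := fun k =>
    (hρ k).measurableSpace_le_of_le fun ω => WithTop.coe_le_coe.2 (hρv k ω)
  have hcond : ∀ k, (fun ω => N (ρ k ω) ω) =ᵐ[μ] μ[N v | (hρ k).measurableSpace] := fun k =>
    hN.stoppedValue_ae_eq_condExp_of_le_const_of_countable_range (hρ k)
      (fun ω => WithTop.coe_le_coe.2 (hρv k ω))
      ((hρc k).image _ |>.mono <| range_subset_iff.2 fun ω => mem_image_of_mem _ (mem_range_self _))
  have hUI : UniformIntegrable (fun k ω => N (ρ k ω) ω) 1 μ :=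
    ((hN.integrable v).uniformIntegrable_condExp hle).ae_eq fun k => (hcond k).symm
  have hXint : Integrable X μ := hUI.integrable_of_ae_tendsto hX
  have hlim : Tendsto (fun k => ∫ ω, N (ρ k ω) ω ∂μ) atTop (𝓝 (∫ ω, X ω ∂μ)) :=
    tendsto_integral_of_L1' X hXint.1
      (Eventually.of_forall fun k => integrable_condExp.congr (hcond k).symm)
      (tendsto_Lp_finite_of_tendsto_ae le_rfl ENNReal.one_ne_top hUI.1
        (memLp_one_iff_integrable.2 hXint) hUI.2.1 hX)
  have hconst : ∀ k, ∫ ω, N (ρ k ω) ω ∂μ = ∫ ω, N v ω ∂μ := fun k => by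
    rw [integral_congr_ae (hcond k), integral_condExp (hle k)]
  simp only [hconst] at hlim
  exact ⟨hXint, tendsto_nhds_unique hlim tendsto_const_nhds⟩

section FollowingPath

variable {ℱ : Filtration ℝ m0} {N : ℝ → Ω → ℝ} {F : ℝ → ℝ}

theorem Martingale.abs_sub_mul_measureReal_agreeUpTo_le (hN : Martingale N ℱ μ)
    (hNc : ∀ ω, Continuous (N · ω)) (hF : Continuous F) {u v ε : ℝ} (huv : u ≤ v)
    (hosc : ∀ r ∈ Icc u v, |F r - F u| ≤ ε) :
    |F v - F u| * μ.real (agreeUpTo N F v) ≤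
      ε * (μ.real (agreeUpTo N F u) - μ.real (agreeUpTo N F v)) := by
  set D := agreeUpTo N F
  have hD : ∀ s, MeasurableSet[ℱ s] (D s) := measurableSet_agreeUpTo hN.stronglyAdapted hNc hF
  have hDv : MeasurableSet (D v) := ℱ.le v _ (hD v)
  have hDanti : Antitone D := agreeUpTo_anti N F
  have hDuv : D v ⊆ D u := hDanti huv
  set σ : Ω → ℝ := fun ω => ⨅ k, exitApprox D u v k ω
  have hσ : ∀ ω, Tendsto (exitApprox D u v · ω) atTop (𝓝 (σ ω)) := fun ω =>
    tendsto_atTop_ciInf (exitApprox_antitone ω)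
      ⟨u, by rintro _ ⟨k, rfl⟩; exact le_exitApprox huv k ω⟩
  have hσ_mem : ∀ ω, σ ω ∈ Icc u v := fun ω => isClosed_Icc.mem_of_tendsto (hσ ω)
    (Eventually.of_forall fun k => ⟨le_exitApprox huv k ω, exitApprox_le huv k ω⟩)
  obtain ⟨hXint, hXeq⟩ := hN.integrable_and_integral_eq_of_tendsto
    (isStoppingTime_exitApprox hD huv) (exitApprox_le huv)
    countable_range_exitApprox
    (Eventually.of_forall fun ω => ((hNc ω).tendsto (σ ω)).comp (hσ ω))
  have hmart : ∫ ω, N v ω ∂μ = ∫ ω, N u ω ∂μ := by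
    simpa using (hN.setIntegral_eq huv MeasurableSet.univ).symm
  have hoff : ∀ ω ∉ D u, N (σ ω) ω - N u ω = 0 := fun ω hω => by
    simp [σ, exitApprox_of_notMem huv hω]
  have hon_v : ∀ ω ∈ D v, N (σ ω) ω - N u ω = F v - F u := fun ω hω => by
    simp only [σ, exitApprox_of_mem hDanti huv hω, ciInf_const]
    rw [hω v le_rfl, hDuv hω u le_rfl]
  have hon_u : ∀ ω ∈ D u, N (σ ω) ω = F (σ ω) := fun ω hω => by
    refine eq_of_forall_rat_lt (hNc ω) hF (fun q hq => ?_) le_rfl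
    rcases le_or_gt (q : ℝ) u with hqu | hqu
    · exact hω q hqu
    · exact mem_of_lt_iInf_exitApprox hDanti huv hqu hq q le_rfl
  -- `σ` is the exit time of `N` from `F` after `u`, capped at `v`; by optional sampling
  -- `N σ - N u` has mean zero.
  have := abs_mul_measureReal_le_of_integral_eq_zero (g := fun ω => N (σ ω) ω - N u ω)
    (hXint.sub (hN.integrable u))
    (by rw [integral_sub hXint (hN.integrable u), hXeq, hmart, sub_self]) hDv hDuv hoff hon_v
    (fun ω hω => by rw [hon_u ω hω.1, hω.1 u le_rfl]; exact hosc _ (hσ_mem ω))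
  rwa [measureReal_sdiff hDuv hDv] at this

theorem Martingale.eq_of_measureReal_agreeUpTo_pos (hN : Martingale N ℱ μ)
    (hNc : ∀ ω, Continuous (N · ω)) (hF : Continuous F) {a b : ℝ} (hab : a ≤ b)
    (hpos : 0 < μ.real (agreeUpTo N F b)) : F b = F a :=
  eq_of_forall_abs_sub_mul_le hab hF.continuousOn
    (fun _ _ hst => measureReal_mono (agreeUpTo_anti N F hst)) hpos
    fun _ _ _ _ huv _ hosc => hN.abs_sub_mul_measureReal_agreeUpTo_le hNc hF huv hosc

end FollowingPath

end MeasureTheory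

lemma IsMeasAtom.restrict_eq_zero_or_compl {Ω : Type*} {m0 : MeasurableSpace Ω} {μ : Measure Ω}
    [IsFiniteMeasure μ] {m : MeasurableSpace Ω} {B : Set Ω} (hB : IsMeasAtom μ m B) (hm : m ≤ m0)
    {A : Set Ω} (hA : MeasurableSet[m] A) : μ.restrict B A = 0 ∨ μ.restrict B Aᶜ = 0 := by
  have hB0 : MeasurableSet[m0] B := hm _ hB.1
  rw [Measure.restrict_apply' hB0, Measure.restrict_apply' hB0]
  refine (hB.2 _ (hA.inter hB.1) inter_subset_right).imp_right fun h => ?_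
  calc μ (Aᶜ ∩ B) = μ (B \ (A ∩ B)) := by rw [sdiff_inter_self_eq_sdiff, sdiff_eq_compl_inter]
    _ = μ B - μ (A ∩ B) := measure_sdiff inter_subset_right
        ((hm _ hA).inter hB0).nullMeasurableSet (measure_ne_top _ _)
    _ = 0 := by rw [h, tsub_self]

lemma measureReal_pos_of_ae_restrict_mem {Ω : Type*} {m0 : MeasurableSpace Ω} {μ : Measure Ω}
    [IsFiniteMeasure μ] {B S : Set Ω} (hB : μ B ≠ 0) (h : ∀ᵐ ω ∂μ.restrict B, ω ∈ S) :
    0 < μ.real S := by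
  have hle : μ B ≤ μ S := calc
    μ B = μ.restrict B univ := (Measure.restrict_apply_univ B).symm
    _ ≤ μ.restrict B S := measure_mono_ae (h.mono fun _ hω _ => hω)
    _ ≤ μ S := Measure.restrict_apply_le B S
  exact ENNReal.toReal_pos ((pos_iff_ne_zero.2 hB).trans_le hle).ne' (measure_ne_top _ _)

lemma continuous_stoppedProcess {Ω : Type*} {M : ℝ → Ω → ℝ} (hM : ∀ ω, Continuous (M · ω))
    (τ : Ω → ℝ) (ω : Ω) : Continuous (stoppedProcess M (fun ω => (τ ω : WithTop ℝ)) · ω) := by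
  have h : (stoppedProcess M (fun ω => (τ ω : WithTop ℝ)) · ω) = fun t => M (min t (τ ω)) ω := by
    ext t; rw [stoppedProcess, ← WithTop.coe_min]; rfl
  rw [h]
  exact (hM ω).comp (continuous_id.min continuous_const)

theorem continuous_local_martingale_constant_on_atom_general
    {Ω : Type*} {m0 : MeasurableSpace Ω} (μ : Measure Ω) [IsProbabilityMeasure μ]
    (ℱ : Filtration ℝ m0)
    (M : ℝ → Ω → ℝ) (hM : IsLocalMartingale μ ℱ M)
    (hMcont : ∀ ω, Continuous fun t => M t ω)
    (tstar : ℝ)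
    (B : Set Ω)
    (hB : IsMeasAtom μ (ℱ tstar) B ∨ IsMeasAtom μ (⨆ s ∈ Set.Iio tstar, ℱ s) B) :
    ∀ᵐ ω ∂μ, ω ∈ B → ∀ t : ℝ, 0 ≤ t → t < tstar → M t ω = M 0 ω := by
  obtain ⟨τ, hτ, -, hτ_tendsto, hτ_mart⟩ := hM
  obtain ⟨m, hm0, hℱm, hBm⟩ : ∃ m, m ≤ m0 ∧ (∀ s < tstar, ℱ s ≤ m) ∧ IsMeasAtom μ m B := by
    rcases hB with hB | hB
    · exact ⟨ℱ tstar, ℱ.le _, fun s hs => ℱ.mono hs.le, hB⟩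
    · exact ⟨_, iSup₂_le fun s _ => ℱ.le s, fun s hs => le_biSup (fun s => ℱ s) hs, hB⟩
  have hν : ∀ s < tstar, ∀ A, MeasurableSet[ℱ s] A →
      μ.restrict B A = 0 ∨ μ.restrict B Aᶜ = 0 := fun s hs A hA =>
    hBm.restrict_eq_zero_or_compl hm0 (hℱm s hs _ hA)
  obtain ⟨n, hn⟩ := exists_ae_le_of_isStoppingTime hτ hτ_tendsto hν
  set N := stoppedProcess M fun ω => (τ n ω : WithTop ℝ)
  have hNc : ∀ ω, Continuous (N · ω) := continuous_stoppedProcess hMcont (τ n)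
  have hNM : ∀ ω, ∀ t ≤ τ n ω, N t ω = M t ω := fun ω t h =>
    stoppedProcess_eq_of_le (WithTop.coe_le_coe.2 h)
  obtain ⟨F, hF, hNF⟩ := exists_continuous_ae_eq_of_stronglyAdapted (X := N)
    (hτ_mart n).stronglyAdapted hNc hν
  rw [← ae_restrict_iff' (hm0 _ hBm.1)]
  rcases eq_or_ne (μ B) 0 with hB0 | hB0
  · simp [Measure.restrict_eq_zero.2 hB0]
  have hF_const : ∀ t, 0 ≤ t → t < tstar → F t = F 0 := fun t ht0 ht =>
    (hτ_mart n).eq_of_measureReal_agreeUpTo_pos hNc hF ht0 <|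
      measureReal_pos_of_ae_restrict_mem hB0 <| hNF.mono fun ω hω r hr => hω r (hr.trans_lt ht)
  filter_upwards [hn, hNF] with ω hωτ hωF t ht0 ht
  rw [← hNM ω t (ht.le.trans hωτ), ← hNM ω 0 ((ht0.trans ht.le).trans hωτ), hωF t ht,
    hωF 0 (ht0.trans_lt ht), hF_const t ht0 ht]

/-- A continuous local martingale is a.s. constant on `B × [0, t*)` whenever `B` is an
atom of `F_{t*}` (or of `F_{t*-} = ⨆_{s < t*} F_s`). -/
theorem continuous_local_martingale_constant_on_atom
    {Ω : Type*} {m0 : MeasurableSpace Ω} (μ : Measure Ω) [IsProbabilityMeasure μ]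
    (ℱ : Filtration ℝ m0)
    (M : ℝ → Ω → ℝ) (hM : IsLocalMartingale μ ℱ M)
    (hMcont : ∀ ω, Continuous fun t => M t ω)
    (tstar : ℝ) (htstar : 0 < tstar)
    (B : Set Ω)
    (hB : IsMeasAtom μ (ℱ tstar) B ∨ IsMeasAtom μ (⨆ s ∈ Set.Iio tstar, ℱ s) B) :
    ∀ᵐ ω ∂μ, ω ∈ B → ∀ t : ℝ, 0 ≤ t → t < tstar → M t ω = M 0 ω :=
  continuous_local_martingale_constant_on_atom_general μ ℱ M hM hMcont tstar B hB
end

section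
/- Let M be the set of probability measures ℚ on a measurable space (Ω,F) such that ℚ is absolutely continuous with respect to some measure in a fixed family P, and such that finitely many fixed random variables ψ_1,...,ψ_n satisfy E_ℚ[ψ_i] = 0 and E_ℚ[ψ_i²] < ∞. Suppose ℚ ∈ M has the property that every X ∈ L²(F,ℚ) can be written as X = a_0 + a_1ψ_1 + ··· + a_nψ_n ℚ-a.s. for real constants a_0,...,a_n. Then ℚ is an extreme point of M. -/
open MeasureTheory

/-- Membership in the set `M` of calibrated measures: `Q` is a probability measure
absolutely continuous w.r.t. some prior in `P`, and each statically traded payoff `ψ i`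
is square-integrable under `Q` with `E_Q[ψ i] = 0`. -/
def IsCalibrated {Ω : Type*} [MeasurableSpace Ω] (P : Set (Measure Ω)) {n : ℕ}
    (ψ : Fin n → Ω → ℝ) (Q : Measure Ω) : Prop :=
  IsProbabilityMeasure Q ∧ (∃ P₀ ∈ P, Q ≪ P₀) ∧
    ∀ i, MemLp (ψ i) 2 Q ∧ ∫ ω, ψ i ω ∂Q = 0

/-!
If `Q = l Q₁ + (1 - l) Q₂`, then `l Q₁ ≤ Q`, so `Q₁ ≪ Q` with a density `Z ≤ 1 / l`; in particular
`Z ∈ L²(Q)`. Calibration of `Q₁` and `Q` says that `Z - 1` is `L²(Q)`-orthogonal to the constants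
and to every `ψ i`, while completeness says that `Z - 1` lies in their span. Hence `Z = 1`, i.e.
`Q₁ = Q`, and symmetrically `Q₂ = Q`.
-/

open scoped ENNReal

namespace MeasureTheory

variable {Ω : Type*} [MeasurableSpace Ω]

namespace Measure

variable {μ ν : Measure Ω} {c : ℝ≥0∞}

lemma absolutelyContinuous_of_smul_le (hc : c ≠ 0) (h : c • μ ≤ ν) : μ ≪ ν :=
  (absolutelyContinuous_smul hc).trans (absolutelyContinuous_of_le h)

lemma rnDeriv_le_inv_of_smul_le [IsFiniteMeasure μ] [SigmaFinite ν] (hc : c ≠ ⊤)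
    (h : c • μ ≤ ν) : μ.rnDeriv ν ≤ᵐ[ν] fun _ => c⁻¹ := by
  filter_upwards [rnDeriv_le_one_of_le h, rnDeriv_smul_left_of_ne_top μ ν hc] with ω hle heq
  rw [heq] at hle
  exact ENNReal.le_inv_iff_mul_le.2 (by simpa [mul_comm] using hle)

lemma memLp_toReal_rnDeriv_of_smul_le [IsFiniteMeasure μ] [IsFiniteMeasure ν] (hc₀ : c ≠ 0)
    (hc : c ≠ ⊤) (h : c • μ ≤ ν) (p : ℝ≥0∞) :
    MemLp (fun ω => (μ.rnDeriv ν ω).toReal) p ν := by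
  refine MemLp.of_bound (measurable_rnDeriv μ ν).ennreal_toReal.aestronglyMeasurable c⁻¹.toReal ?_
  filter_upwards [rnDeriv_le_inv_of_smul_le hc h] with ω hω
  rw [Real.norm_of_nonneg ENNReal.toReal_nonneg]
  exact ENNReal.toReal_mono (ENNReal.inv_ne_top.2 hc₀) hω

end Measure

lemma ae_eq_zero_of_orthogonal_of_ae_eq_affine {ι : Type*} [Fintype ι] {μ : Measure Ω}
    [IsFiniteMeasure μ] {f : Ω → ℝ} {g : ι → Ω → ℝ} (hf : MemLp f 2 μ) (hg : ∀ i, MemLp (g i) 2 μ)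
    (hf₀ : ∫ ω, f ω ∂μ = 0) (hfg : ∀ i, ∫ ω, f ω * g i ω ∂μ = 0) (a₀ : ℝ) (a : ι → ℝ)
    (hspan : f =ᵐ[μ] fun ω => a₀ + ∑ i, a i * g i ω) :
    f =ᵐ[μ] 0 := by
  have hfg_int : ∀ i, Integrable (fun ω => f ω * g i ω) μ := fun i => hf.integrable_mul (hg i)
  have hsq : ∫ ω, f ω * f ω ∂μ = 0 := by
    have hexpand : (fun ω => f ω * f ω) =ᵐ[μ]
        fun ω => a₀ * f ω + ∑ i, a i * (f ω * g i ω) := by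
      filter_upwards [hspan] with ω hω
      nth_rw 2 [hω]
      rw [mul_add, Finset.mul_sum, mul_comm]
      exact congrArg _ (Finset.sum_congr rfl fun i _ => mul_left_comm _ _ _)
    rw [integral_congr_ae hexpand,
      integral_add ((hf.integrable one_le_two).const_mul a₀)
        (integrable_finsetSum _ fun i _ => (hfg_int i).const_mul (a i)),
      integral_finsetSum _ fun i _ => (hfg_int i).const_mul (a i)]
    simp [integral_const_mul, hf₀, hfg]
  have hsq_ae : (fun ω => f ω * f ω) =ᵐ[μ] 0 :=
    (integral_eq_zero_iff_of_nonneg (fun ω => mul_self_nonneg (f ω))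
      (hf.integrable_mul hf)).1 hsq
  filter_upwards [hsq_ae] with ω hω
  exact mul_self_eq_zero.1 hω

lemma eq_of_smul_le_of_static_complete {ι : Type*} [Fintype ι] {ψ : ι → Ω → ℝ} {Q Q₁ : Measure Ω}
    [IsProbabilityMeasure Q] [IsProbabilityMeasure Q₁] (hψ : ∀ i, MemLp (ψ i) 2 Q)
    (hψQ : ∀ i, ∫ ω, ψ i ω ∂Q = 0) (hψQ₁ : ∀ i, ∫ ω, ψ i ω ∂Q₁ = 0)
    (hcomplete : ∀ X : Ω → ℝ, MemLp X 2 Q →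
      ∃ (a₀ : ℝ) (a : ι → ℝ), X =ᵐ[Q] fun ω => a₀ + ∑ i, a i * ψ i ω)
    {c : ℝ≥0∞} (hc₀ : c ≠ 0) (hc : c ≠ ⊤) (h : c • Q₁ ≤ Q) :
    Q₁ = Q := by
  have hac : Q₁ ≪ Q := Measure.absolutelyContinuous_of_smul_le hc₀ h
  set Z : Ω → ℝ := fun ω => (Q₁.rnDeriv Q ω).toReal
  have hZ : MemLp Z 2 Q := Measure.memLp_toReal_rnDeriv_of_smul_le hc₀ hc h 2
  obtain ⟨a₀, a, hZa⟩ := hcomplete Z hZ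
  have hint : ∫ ω, Z ω - 1 ∂Q = 0 := by
    rw [integral_sub (hZ.integrable one_le_two) (integrable_const 1),
      Measure.integral_toReal_rnDeriv hac]
    simp
  have horth : ∀ i, ∫ ω, (Z ω - 1) * ψ i ω ∂Q = 0 := fun i => by
    simp only [sub_mul, one_mul]
    rw [integral_sub (f := fun ω => Z ω * ψ i ω) (hZ.integrable_mul (hψ i))
      ((hψ i).integrable one_le_two),
      integral_toReal_rnDeriv_mul hac, hψQ₁, hψQ, sub_zero]
  have hZ1 : (fun ω => Z ω - 1) =ᵐ[Q] 0 :=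
    ae_eq_zero_of_orthogonal_of_ae_eq_affine (hZ.sub (memLp_const 1)) hψ hint horth (a₀ - 1) a
      (by filter_upwards [hZa] with ω hω; rw [hω]; ring)
  refine (Measure.rnDeriv_eq_one_iff_eq hac).1 ?_
  filter_upwards [hZ1] with ω hω
  exact ENNReal.toReal_eq_one_iff _ |>.1 (sub_eq_zero.1 hω)

end MeasureTheory

/-- Semi-static completeness implies extremality (semi-static Jacod–Yor theorem, static
case): if every `X ∈ L²(F, Q)` can be written `Q`-a.s. as an affine combination
`a₀ + a₁ ψ₁ + ⋯ + a_n ψ_n` of the statically traded payoffs and cash, then `Q` is an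
extreme point of the set of calibrated measures. -/
theorem extreme_of_static_completeness
    {Ω : Type*} [MeasurableSpace Ω] (P : Set (Measure Ω)) {n : ℕ}
    (ψ : Fin n → Ω → ℝ) (Q : Measure Ω)
    (hQ : IsCalibrated P ψ Q)
    (hcomplete : ∀ X : Ω → ℝ, MemLp X 2 Q →
      ∃ (a₀ : ℝ) (a : Fin n → ℝ),
        X =ᵐ[Q] fun ω => a₀ + ∑ i, a i * ψ i ω) :
    ∀ (Q₁ Q₂ : Measure Ω) (l : ℝ), IsCalibrated P ψ Q₁ → IsCalibrated P ψ Q₂ →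
      0 < l → l < 1 →
      Q = ENNReal.ofReal l • Q₁ + ENNReal.ofReal (1 - l) • Q₂ →
      Q₁ = Q ∧ Q₂ = Q := by
  intro Q₁ Q₂ l hQ₁ hQ₂ hl hl1 hmix
  obtain ⟨hQprob, -, hψQ⟩ := hQ
  obtain ⟨hQ₁prob, -, hψQ₁⟩ := hQ₁
  obtain ⟨hQ₂prob, -, hψQ₂⟩ := hQ₂
  exact ⟨eq_of_smul_le_of_static_complete (fun i => (hψQ i).1) (fun i => (hψQ i).2)
      (fun i => (hψQ₁ i).2) hcomplete (ENNReal.ofReal_pos.2 hl).ne' ENNReal.ofReal_ne_top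
      (hmix ▸ Measure.le_add_right le_rfl),
    eq_of_smul_le_of_static_complete (fun i => (hψQ i).1) (fun i => (hψQ i).2)
      (fun i => (hψQ₂ i).2) hcomplete (ENNReal.ofReal_pos.2 (by linarith)).ne' ENNReal.ofReal_ne_top
      (hmix ▸ Measure.le_add_left le_rfl)⟩
end

section
/- Let ℚ be a probability measure on (Ω,F), let W ⊆ L²(F,ℚ) contain the constants, and suppose W = L²(F,ℚ). If ℚ = λℚ¹ + (1-λ)ℚ² where 0 < λ < 1, ℚ¹,ℚ² are probability measures absolutely continuous with respect to ℚ with bounded densities, and E_{ℚ¹}[Y] = E_ℚ[Y] for all Y ∈ W with E_ℚ[Y²] < ∞, then ℚ¹ = ℚ² = ℚ. -/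
open MeasureTheory
open scoped ENNReal

/-! Indicators of measurable sets are square-integrable, so completeness of `W` lets one test
`Q₁` against every indicator (a.e. equality under `Q` transfers to `Q₁ ≪ Q` since `l > 0`):
`Q₁ = Q`. The decomposition `Q = l Q + (1 - l) Q₂` then forces
`Q₂ = Q`. -/

namespace MeasureTheory.Measure

variable {Ω : Type*} [MeasurableSpace Ω]

lemma absolutelyContinuous_of_eq_smul_add {μ ν ν' : Measure Ω} {c : ℝ≥0∞} (hc : c ≠ 0)
    (h : μ = c • ν + ν') : ν ≪ μ :=
  h ▸ (absolutelyContinuous_smul hc).add_right ν'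

lemma eq_of_integral_eq_of_memLp_two {μ ν : Measure Ω} [IsFiniteMeasure μ] [IsFiniteMeasure ν]
    (h : ∀ X : Ω → ℝ, MemLp X 2 μ → ∫ ω, X ω ∂ν = ∫ ω, X ω ∂μ) : ν = μ := by
  ext s hs
  have hX : MemLp (s.indicator 1 : Ω → ℝ) 2 μ :=
    memLp_indicator_const 2 hs 1 (Or.inr (measure_ne_top μ s))
  have := h _ hX
  rwa [integral_indicator_one hs, integral_indicator_one hs, measureReal_eq_measureReal_iff] at this

lemma eq_of_eq_smul_self_add_smul {μ ν : Measure Ω} [IsFiniteMeasure μ] {a b : ℝ≥0∞}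
    (hab : a + b = 1) (hb0 : b ≠ 0) (h : μ = a • μ + b • ν) : ν = μ := by
  have ha : a ≠ ∞ := ne_top_of_le_ne_top ENNReal.one_ne_top (hab ▸ le_self_add)
  have hb : b ≠ ∞ := ne_top_of_le_ne_top ENNReal.one_ne_top (hab ▸ le_add_self)
  ext s -
  have hsplit : a * μ s + b * μ s = a * μ s + b * ν s := by
    rw [← add_mul, hab, one_mul]
    conv_lhs => rw [h]
    simp only [add_apply, smul_apply, smul_eq_mul]
  have hcancel := (ENNReal.add_right_inj (ENNReal.mul_ne_top ha (measure_ne_top μ s))).mp hsplit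
  exact ((ENNReal.mul_right_inj hb0 hb).mp hcancel).symm

end MeasureTheory.Measure

open Measure in
theorem completeness_forces_trivial_decomposition_general
    {Ω : Type*} [MeasurableSpace Ω] (Q : Measure Ω) [IsProbabilityMeasure Q]
    (W : Set (Ω → ℝ))
    (hWfull : ∀ X : Ω → ℝ, MemLp X 2 Q → ∃ Y ∈ W, X =ᵐ[Q] Y)
    (Q₁ Q₂ : Measure Ω) [IsProbabilityMeasure Q₁]
    (l : ℝ) (hl0 : 0 < l) (hl1 : l < 1)
    (hconv : Q = ENNReal.ofReal l • Q₁ + ENNReal.ofReal (1 - l) • Q₂)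
    (hmatch : ∀ Y ∈ W, MemLp Y 2 Q → ∫ ω, Y ω ∂Q₁ = ∫ ω, Y ω ∂Q) :
    Q₁ = Q ∧ Q₂ = Q := by
  have hac : Q₁ ≪ Q :=
    absolutelyContinuous_of_eq_smul_add (ENNReal.ofReal_pos.mpr hl0).ne' hconv
  have h₁ : Q₁ = Q := eq_of_integral_eq_of_memLp_two fun X hX => by
    obtain ⟨Y, hYW, hXY⟩ := hWfull X hX
    rw [integral_congr_ae (hac.ae_eq hXY), integral_congr_ae hXY]
    exact hmatch Y hYW (hX.ae_eq hXY)
  refine ⟨h₁, eq_of_eq_smul_self_add_smul ?_ ?_ (h₁ ▸ hconv)⟩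
  · rw [← ENNReal.ofReal_add hl0.le (by linarith), add_sub_cancel, ENNReal.ofReal_one]
  · exact (ENNReal.ofReal_pos.mpr (by linarith)).ne'

/-- If the set `W` of semi-static outcomes (which contains the constants and consists of
square-integrable random variables) is all of `L²(F, Q)`, and `Q = l Q₁ + (1-l) Q₂` with
`0 < l < 1` for probability measures `Q₁, Q₂ ≪ Q` with bounded densities, such that
`E_{Q₁}[Y] = E_Q[Y]` for all square-integrable `Y ∈ W`, then `Q₁ = Q₂ = Q`. -/
theorem completeness_forces_trivial_decomposition
    {Ω : Type*} [MeasurableSpace Ω] (Q : Measure Ω) [IsProbabilityMeasure Q]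
    (W : Set (Ω → ℝ))
    (hW2 : ∀ f ∈ W, MemLp f 2 Q)
    (hWconst : ∀ c : ℝ, (fun _ => c) ∈ W)
    (hWfull : ∀ X : Ω → ℝ, MemLp X 2 Q → ∃ Y ∈ W, X =ᵐ[Q] Y)
    (Q₁ Q₂ : Measure Ω) [IsProbabilityMeasure Q₁] [IsProbabilityMeasure Q₂]
    (l : ℝ) (hl0 : 0 < l) (hl1 : l < 1)
    (hconv : Q = ENNReal.ofReal l • Q₁ + ENNReal.ofReal (1 - l) • Q₂)
    (Z₁ Z₂ : Ω → ℝ≥0∞) (hZ₁ : Measurable Z₁) (hZ₂ : Measurable Z₂)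
    (hd₁ : Q₁ = Q.withDensity Z₁) (hd₂ : Q₂ = Q.withDensity Z₂)
    (hb₁ : ∃ C : ℝ≥0∞, C ≠ ⊤ ∧ ∀ ω, Z₁ ω ≤ C)
    (hb₂ : ∃ C : ℝ≥0∞, C ≠ ⊤ ∧ ∀ ω, Z₂ ω ≤ C)
    (hmatch : ∀ Y ∈ W, MemLp Y 2 Q → ∫ ω, Y ω ∂Q₁ = ∫ ω, Y ω ∂Q) :
    Q₁ = Q ∧ Q₂ = Q :=
  completeness_forces_trivial_decomposition_general Q W hWfull Q₁ Q₂ l hl0 hl1 hconv hmatch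
end

section
/- Let S be a continuous martingale under ℚ with S_0 = 0, and let τ = sup{t ∈ [0,T] : S_t = 1} with τ = 0 if the set is empty. Suppose S remains a martingale in the progressive enlargement 𝔾 of its natural filtration with the process 1_{[τ,T]}. Then ℚ(S_t < 1 for all t ∈ [0,T]) = 1 and τ = 0 almost surely. -/
/-!
Because of the enlargement, the last hitting time `τ` of level `1` is a `𝔾`-stopping time, and
`S_τ = 1_{τ > 0}` since `S_0 = 0`. Optional sampling for the continuous `𝔾`-martingale `S` gives
`ℚ(τ > 0) = E[S_τ] = E[S_T] = E[S_0] = 0`, so `τ = 0` a.s., and by the intermediate value theorem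
`S` then stays below `1` on `[0, T]`.

Optional sampling at a bounded stopping time is reduced to the discrete case by approximating `τ`
from above by the grid times `⌈τ r⌉ / r` and using right-continuity of the paths. The values at the
grid times are conditional expectations of `S_T`, hence uniformly integrable, which is what lets
the expectations pass to the limit (Vitali).
-/

open MeasureTheory

variable {Ω : Type*} {m0 : MeasurableSpace Ω}

/-- The filtration generated by the single-jump process `1_{[τ,T]}`. -/
noncomputable def jumpFiltration' (τ : Ω → ℝ) (u : ℝ) : MeasurableSpace Ω :=
  ⨆ s ∈ Set.Iic u, MeasurableSpace.comap
    (fun ω => if τ ω ≤ s then (1 : ℝ) else 0) inferInstance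

open Filter Topology

theorem ContinuousWithinAt.tendsto_nat_ceil_mul_div {E : Type*} [TopologicalSpace E]
    {f : ℝ → E} {t : ℝ} (hf : ContinuousWithinAt f (Set.Ici t) t) (ht : 0 ≤ t)
    {r : ℕ → ℝ} (hr : Tendsto r atTop atTop) :
    Tendsto (fun n => f (⌈t * r n⌉₊ / r n)) atTop (𝓝 (f t)) := by
  refine hf.tendsto.comp (tendsto_nhdsWithin_iff.2
    ⟨(tendsto_nat_ceil_mul_div_atTop ht).comp hr, ?_⟩)
  filter_upwards [hr.eventually_gt_atTop 0] with n hn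
  exact (le_div_iff₀ hn).2 (Nat.le_ceil _)

namespace MeasureTheory

variable {μ : Measure Ω}

theorem UniformIntegrable.tendsto_integral_of_ae_tendsto {E : Type*} [NormedAddCommGroup E]
    [NormedSpace ℝ E] [CompleteSpace E] [IsFiniteMeasure μ]
    {f : ℕ → Ω → E} {g : Ω → E} (hf : UniformIntegrable f 1 μ)
    (hfg : ∀ᵐ ω ∂μ, Tendsto (fun n => f n ω) atTop (𝓝 (g ω))) :
    Tendsto (fun n => ∫ ω, f n ω ∂μ) atTop (𝓝 (∫ ω, g ω ∂μ)) := by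
  have hg := hf.integrable_of_ae_tendsto hfg
  exact tendsto_integral_of_L1' g hg.1
    (Eventually.of_forall fun n => memLp_one_iff_integrable.1 (hf.memLp n))
    (tendsto_Lp_finite_of_tendsto_ae le_rfl ENNReal.one_ne_top hf.1
      (memLp_one_iff_integrable.2 hg) hf.2.1 hfg)

def Filtration.comp {ι κ : Type*} [Preorder ι] [Preorder κ] (𝒢 : Filtration ι m0)
    (g : κ → ι) (hg : Monotone g) : Filtration κ m0 :=
  ⟨fun k => 𝒢 (g k), fun _ _ h => 𝒢.mono (hg h), fun k => 𝒢.le (g k)⟩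

theorem Martingale.comp {ι κ E : Type*} [Preorder ι] [Preorder κ] [NormedAddCommGroup E]
    [NormedSpace ℝ E] [CompleteSpace E] {𝒢 : Filtration ι m0}
    {X : ι → Ω → E} (hX : Martingale X 𝒢 μ) {g : κ → ι} (hg : Monotone g) :
    Martingale (fun k => X (g k)) (𝒢.comp g hg) μ :=
  ⟨fun k => hX.stronglyAdapted (g k), fun _ _ hij => hX.condExp_ae_eq (hg hij)⟩

theorem IsStoppingTime.nat_ceil_mul {𝒢 : Filtration ℝ m0} {τ : Ω → ℝ}
    (hτ : IsStoppingTime 𝒢 fun ω => τ ω) {r : ℝ} (hr : 0 < r) :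
    IsStoppingTime (𝒢.comp _ (Nat.mono_cast.div_const hr.le))
      fun ω => (⌈τ ω * r⌉₊ : WithTop ℕ) := by
  intro i
  change MeasurableSet[𝒢 (i / r)] _
  simpa [le_div_iff₀ hr] using hτ (i / r)

theorem Martingale.integral_stoppingTime_eq_of_rightContinuous [IsFiniteMeasure μ] {X : ℝ → Ω → ℝ}
    {𝒢 : Filtration ℝ m0} {τ : Ω → ℝ} {T : ℝ} (hX : Martingale X 𝒢 μ)
    (hXcont : ∀ ω t, ContinuousWithinAt (X · ω) (Set.Ici t) t)
    (hτ : IsStoppingTime 𝒢 fun ω => τ ω) (hτ0 : ∀ ω, 0 ≤ τ ω) (hτT : ∀ ω, τ ω ≤ T) (hT : 0 < T) :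
    ∫ ω, X (τ ω) ω ∂μ = ∫ ω, X T ω ∂μ := by
  -- the grid `k / r n` reaches `T` at `k = n + 1`
  set r : ℕ → ℝ := fun n => (n + 1) / T
  have hr : ∀ n, 0 < r n := fun n => by positivity
  have hσ := fun n => hτ.nat_ceil_mul (hr n)
  have hσ_le : ∀ n ω, (⌈τ ω * r n⌉₊ : WithTop ℕ) ≤ (n + 1 : ℕ) := fun n ω => by
    have hτr : τ ω * r n ≤ n + 1 :=
      calc τ ω * r n ≤ T * r n := by gcongr; exact hτT ω
        _ = n + 1 := by simp only [r]; field_simp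
    exact_mod_cast Nat.ceil_le.2 (by exact_mod_cast hτr)
  set g : ℕ → Ω → ℝ := fun n => μ[X T | (hσ n).measurableSpace]
  have hg : ∀ n, (fun ω => X (⌈τ ω * r n⌉₊ / r n) ω) =ᵐ[μ] g n := fun n => by
    have h := (hX.comp (Nat.mono_cast.div_const (hr n).le)).stoppedValue_ae_eq_condExp_of_le_const
      (hσ n) (hσ_le n)
    have hT' : ((n : ℝ) + 1) / r n = T := by simp only [r]; field_simp
    simp only [Nat.cast_id, Nat.cast_add, Nat.cast_one, hT'] at h
    exact h
  have hUI : UniformIntegrable g 1 μ := (hX.integrable T).uniformIntegrable_condExp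
    fun n => (hσ n).measurableSpace_le_of_le (hσ_le n)
  have hr_top : Tendsto r atTop atTop :=
    (tendsto_natCast_atTop_atTop.atTop_add tendsto_const_nhds).atTop_div_const hT
  have hlim : ∀ᵐ ω ∂μ, Tendsto (fun n => g n ω) atTop (𝓝 (X (τ ω) ω)) := by
    filter_upwards [ae_all_iff.2 hg] with ω hω
    exact ((hXcont ω (τ ω)).tendsto_nat_ceil_mul_div (hτ0 ω) hr_top).congr hω
  refine tendsto_nhds_unique (hUI.tendsto_integral_of_ae_tendsto hlim) ?_
  exact tendsto_const_nhds.congr fun n =>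
    (integral_condExp ((hσ n).measurableSpace_le_of_le (hσ_le n))).symm

end MeasureTheory

section LastHittingTime

variable {f : ℝ → ℝ} {a T : ℝ}

noncomputable def lastHittingTime (f : ℝ → ℝ) (a T : ℝ) : ℝ :=
  sSup {t | t ∈ Set.Icc 0 T ∧ f t = a}

theorem lastHittingTime_nonneg : 0 ≤ lastHittingTime f a T :=
  Real.sSup_nonneg fun _ ht => ht.1.1

theorem lastHittingTime_le (hT : 0 ≤ T) : lastHittingTime f a T ≤ T :=
  Real.sSup_le (fun _ ht => ht.1.2) hT

theorem apply_lastHittingTime (hf : Continuous f) (h : 0 < lastHittingTime f a T) :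
    f (lastHittingTime f a T) = a := by
  have hne : {t | t ∈ Set.Icc 0 T ∧ f t = a}.Nonempty := by
    by_contra hempty
    rw [Set.not_nonempty_iff_eq_empty] at hempty
    rw [lastHittingTime, hempty, Real.sSup_empty] at h
    exact h.false
  exact ((isCompact_Icc.inter_right (isClosed_eq hf continuous_const)).sSup_mem hne).2

theorem apply_lastHittingTime_eq_ite (hf : Continuous f) (h0 : f 0 = 0) :
    f (lastHittingTime f a T) = if 0 < lastHittingTime f a T then a else 0 := by
  split_ifs with h
  · exact apply_lastHittingTime hf h
  · rwa [le_antisymm (not_lt.1 h) lastHittingTime_nonneg]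

theorem lt_of_lastHittingTime_eq_zero (hf : Continuous f) (h0 : f 0 < a)
    (h : lastHittingTime f a T = 0) : ∀ t ∈ Set.Icc 0 T, f t < a := by
  intro t ht
  by_contra! hat
  obtain ⟨s, hs, hfs⟩ := intermediate_value_Icc ht.1 hf.continuousOn ⟨h0.le, hat⟩
  have hs0 : s ≤ 0 := h ▸ le_csSup ⟨T, fun _ hu => hu.1.2⟩ ⟨⟨hs.1, hs.2.trans ht.2⟩, hfs⟩
  rw [le_antisymm hs0 hs.1] at hfs
  exact h0.ne hfs

end LastHittingTime

theorem measurableSet_le_jumpFiltration' {τ : Ω → ℝ} {t u : ℝ} (htu : t ≤ u) :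
    MeasurableSet[jumpFiltration' τ u] {ω | τ ω ≤ t} := by
  refine le_biSup (fun s => MeasurableSpace.comap (fun ω => if τ ω ≤ s then (1 : ℝ) else 0)
    inferInstance) (Set.mem_Iic.2 htu) _ ⟨{1}, measurableSet_singleton 1, ?_⟩
  ext ω
  by_cases h : τ ω ≤ t <;> simp [h]

theorem isStoppingTime_of_eq_iInf_sup_jumpFiltration' {ℱ 𝔾 : Filtration ℝ m0} {τ : Ω → ℝ}
    (h𝔾 : ∀ t, (𝔾 t : MeasurableSpace Ω) = ⨅ u ∈ Set.Ioi t, (ℱ u ⊔ jumpFiltration' τ u)) :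
    IsStoppingTime 𝔾 fun ω => τ ω := by
  intro t
  simp only [WithTop.coe_le_coe]
  rw [h𝔾 t]
  exact MeasurableSpace.measurableSet_iInf.2 fun u => MeasurableSpace.measurableSet_iInf.2
    fun htu => le_sup_right (α := MeasurableSpace Ω) _
      (measurableSet_le_jumpFiltration' (Set.mem_Ioi.1 htu).le)

theorem last_hitting_time_enlargement_forces_below_one_general
    (μ : Measure Ω) [IsProbabilityMeasure μ]
    (T : ℝ) (hT : 0 < T)
    (S : ℝ → Ω → ℝ)
    (hScont : ∀ ω, Continuous fun t => S t ω)
    (hS0 : ∀ ω, S 0 ω = 0)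
    (ℱ : Filtration ℝ m0)
    (𝔾 : Filtration ℝ m0)
    (h𝔾 : ∀ t, (𝔾 t : MeasurableSpace Ω) =
      ⨅ u ∈ Set.Ioi t, ((ℱ u : MeasurableSpace Ω) ⊔
        jumpFiltration' (fun ω => sSup {t | t ∈ Set.Icc 0 T ∧ S t ω = 1}) u))
    (hSmartG : Martingale S 𝔾 μ) :
    (∀ᵐ ω ∂μ, ∀ t ∈ Set.Icc (0 : ℝ) T, S t ω < 1) ∧
    (∀ᵐ ω ∂μ, sSup {t | t ∈ Set.Icc 0 T ∧ S t ω = 1} = 0) := by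
  set τ : Ω → ℝ := fun ω => lastHittingTime (S · ω) 1 T
  have hτ : IsStoppingTime 𝔾 fun ω => τ ω := isStoppingTime_of_eq_iInf_sup_jumpFiltration' h𝔾
  have hpos : MeasurableSet {ω | 0 < τ ω} := by
    simpa using 𝔾.le 0 _ (hτ.measurableSet_gt 0)
  have hSτ : (fun ω => S (τ ω) ω) = {ω | 0 < τ ω}.indicator 1 := by
    ext ω
    simpa only [Set.indicator_apply, Set.mem_ofPred_eq, Pi.one_apply] using
      apply_lastHittingTime_eq_ite (hScont ω) (hS0 ω)
  have hμ : μ.real {ω | 0 < τ ω} = 0 := by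
    calc μ.real {ω | 0 < τ ω} = ∫ ω, S (τ ω) ω ∂μ := by rw [hSτ, integral_indicator_one hpos]
      _ = ∫ ω, S T ω ∂μ := hSmartG.integral_stoppingTime_eq_of_rightContinuous
          (fun ω t => (hScont ω).continuousWithinAt) hτ (fun _ => lastHittingTime_nonneg)
          (fun _ => lastHittingTime_le hT.le) hT
      _ = ∫ ω, S 0 ω ∂μ := by simpa using (hSmartG.setIntegral_eq hT.le MeasurableSet.univ).symm
      _ = 0 := by simp [hS0]
  have hτ0 : ∀ᵐ ω ∂μ, τ ω = 0 := by
    filter_upwards [measure_eq_zero_iff_ae_notMem.1 ((measureReal_eq_zero_iff).1 hμ)] with ω h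
    exact le_antisymm (not_lt.1 h) lastHittingTime_nonneg
  exact ⟨hτ0.mono fun ω h => lt_of_lastHittingTime_eq_zero (hScont ω) (by simp [hS0]) h, hτ0⟩

/-- Let `S` be a continuous martingale with `S₀ = 0`, `𝔽` its natural (right-continuous)
filtration, and `τ = sup{t ∈ [0,T] : S_t = 1}` (with `τ = 0` if this set is empty, which
is the Lean convention `sSup ∅ = 0`).  If `S` remains a martingale in the progressive
enlargement `𝔾` of `𝔽` with the single-jump process `1_{[τ,T]}`, then a.s. `S_t < 1` for
all `t ∈ [0,T]` and `τ = 0` a.s. -/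
theorem last_hitting_time_enlargement_forces_below_one
    (μ : Measure Ω) [IsProbabilityMeasure μ]
    (T : ℝ) (hT : 0 < T)
    (S : ℝ → Ω → ℝ)
    (hScont : ∀ ω, Continuous fun t => S t ω)
    (hS0 : ∀ ω, S 0 ω = 0)
    (ℱ : Filtration ℝ m0)
    (hℱ : ∀ t, (ℱ t : MeasurableSpace Ω) =
      ⨅ u ∈ Set.Ioi t, ⨆ s ∈ Set.Iic u, MeasurableSpace.comap (S s) inferInstance)
    (hSmartF : Martingale S ℱ μ)
    (𝔾 : Filtration ℝ m0)
    (h𝔾 : ∀ t, (𝔾 t : MeasurableSpace Ω) =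
      ⨅ u ∈ Set.Ioi t, ((ℱ u : MeasurableSpace Ω) ⊔
        jumpFiltration' (fun ω => sSup {t | t ∈ Set.Icc 0 T ∧ S t ω = 1}) u))
    (hSmartG : Martingale S 𝔾 μ) :
    (∀ᵐ ω ∂μ, ∀ t ∈ Set.Icc (0 : ℝ) T, S t ω < 1) ∧
    (∀ᵐ ω ∂μ, sSup {t | t ∈ Set.Icc 0 T ∧ S t ω = 1} = 0) :=
  last_hitting_time_enlargement_forces_below_one_general μ T hT S hScont hS0 ℱ 𝔾 h𝔾 hSmartG
end
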